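/- arXiv:2207.06564 — 3 statements merged into one kernel-verified Lean document; each statement's English description precedes it below -/
import Mathlib

section
/- In the repeated static Roy model with binary outcomes where Dt = 1{Yt(1) ≥ Yt(0)} for t = 0,1, Yt(d) ∈ {0,1}, and P(Yt(1) ≥ Yt(0)) ∈ (0,1) for each t: the full parallel trends condition holds if and only if both (1) E[Y0(0)] = E[Y1(0)] (stationarity of mean untreated outcomes), and (2) P(Y0(0) = Y1(0) = 1 | D0·D1 = 0) = 1 (untreated outcomes are degenerate at 1 among the ever-untreated). -/
/-!
Write `Δ = Y1(0) - Y0(0)`. Under the Roy rule `Dt = 0` forces `Yt(0) = 1`, so `Δ ≤ 0` on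
`{D0 = 0}` and `Δ ≥ 0` on `{D1 = 0}`. Under parallel trends with common value `τ`, the mean of `Δ`
over each of these two events (unions of cells, of positive probability) is `τ`, hence `τ = 0`.
Then `Δ` integrates to zero over `{D0 = 0}` and over `{D1 = 0}`, so it vanishes a.e. on the
ever-untreated event, where `Δ = 0` means `Y0(0) = Y1(0) = 1`; and `E Δ = τ = 0`. Conversely,
these two facts make every cell mean of `Δ` zero: the three ever-untreated cells directly, and the
always-treated cell because it is the complement of the ever-untreated event.
-/

open MeasureTheory ProbabilityTheory

/-- Conditional expectation of a real random variable `Y` given the event `A`. -/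
noncomputable def cexp {Ω : Type*} {mΩ : MeasurableSpace Ω} (μ : Measure Ω) (A : Set Ω)
    (Y : Ω → ℝ) : ℝ := ∫ ω, Y ω ∂(@ProbabilityTheory.cond Ω mΩ μ A)

section Conditioning

variable {Ω : Type*} [MeasurableSpace Ω] {μ : Measure Ω} {A B S U : Set Ω} {f : Ω → ℝ} {τ : ℝ}

lemma cexp_eq_inv_mul_setIntegral (μ : Measure Ω) (A : Set Ω) (f : Ω → ℝ) :
    cexp μ A f = (μ A).toReal⁻¹ * ∫ ω in A, f ω ∂μ := by
  rw [cexp, ProbabilityTheory.cond, integral_smul_measure, ENNReal.toReal_inv, smul_eq_mul]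

lemma ae_restrict_eq_zero_of_setIntegral_eq_zero_of_nonpos (hA : MeasurableSet A)
    (hf : Integrable f μ) (hle : ∀ ω ∈ A, f ω ≤ 0) (h : ∫ ω in A, f ω ∂μ = 0) :
    ∀ᵐ ω ∂μ.restrict A, f ω = 0 := by
  have hneg := (setIntegral_eq_zero_iff_of_nonneg_ae (f := -f)
    (ae_restrict_of_forall_mem hA fun ω hω => neg_nonneg.2 (hle ω hω)) hf.neg.integrableOn).1
    (by simp only [Pi.neg_apply, integral_neg, h, neg_zero])
  filter_upwards [hneg] with ω hω
  simpa using hω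

variable [IsFiniteMeasure μ]

lemma setIntegral_eq_mul_of_cexp_eq (h : 0 < μ A → cexp μ A f = τ) :
    ∫ ω in A, f ω ∂μ = (μ A).toReal * τ := by
  rcases (zero_le : 0 ≤ μ A).eq_or_lt with hA | hA
  · rw [← hA, Measure.restrict_eq_zero.2 hA.symm, integral_zero_measure, ENNReal.toReal_zero,
      zero_mul]
  · have hA' : (μ A).toReal ≠ 0 := ENNReal.toReal_ne_zero.2 ⟨hA.ne', measure_ne_top μ A⟩
    rw [← h hA, cexp_eq_inv_mul_setIntegral, mul_inv_cancel_left₀ hA']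

lemma setIntegral_union_eq_mul (hAB : Disjoint A B) (hB : MeasurableSet B)
    (hf : Integrable f μ) (hfA : ∫ ω in A, f ω ∂μ = (μ A).toReal * τ)
    (hfB : ∫ ω in B, f ω ∂μ = (μ B).toReal * τ) :
    ∫ ω in A ∪ B, f ω ∂μ = (μ (A ∪ B)).toReal * τ := by
  rw [setIntegral_union hAB hB hf.integrableOn hf.integrableOn, measure_union hAB hB,
    ENNReal.toReal_add (measure_ne_top μ A) (measure_ne_top μ B), hfA, hfB, add_mul]

lemma cond_eq_one_iff_ae_restrict (hU : μ U ≠ 0) (hS : MeasurableSet S) :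
    μ[S | U] = 1 ↔ ∀ᵐ ω ∂μ.restrict U, ω ∈ S := by
  have := cond_isProbabilityMeasure (μ := μ) hU
  rw [← prob_compl_eq_zero_iff hS, ← mem_ae_iff, ProbabilityTheory.cond,
    ← Filter.eventually_mem_set]
  simp only [ae_iff, Measure.smul_apply, smul_eq_mul, mul_eq_zero, ENNReal.inv_eq_zero,
    measure_ne_top, false_or]

end Conditioning

lemma setOf_mul_eq_zero_eq_union {α : Type*} (D0 D1 : α → ℕ) :
    {ω | D0 ω * D1 ω = 0} = {ω | D0 ω = 0} ∪ {ω | D1 ω = 0} := by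
  ext ω
  simp only [Set.mem_ofPred_eq, Set.mem_union, Nat.mul_eq_zero]

section ParallelTrends

variable {Ω : Type*} [MeasurableSpace Ω] {μ : Measure Ω} {D0 D1 : Ω → ℕ} {f : Ω → ℝ}

def HasParallelTrends (μ : Measure Ω) (D0 D1 : Ω → ℕ) (f : Ω → ℝ) (τ : ℝ) : Prop :=
  ∀ d0 d1 : ℕ, d0 ≤ 1 → d1 ≤ 1 → 0 < μ {ω | D0 ω = d0 ∧ D1 ω = d1} →
    cexp μ {ω | D0 ω = d0 ∧ D1 ω = d1} f = τ

lemma hasParallelTrends_zero (hD0 : Measurable D0) (hD1 : Measurable D1)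
    (hD0_le : ∀ ω, D0 ω ≤ 1) (hD1_le : ∀ ω, D1 ω ≤ 1) (hf : Integrable f μ)
    (hint : ∫ ω, f ω ∂μ = 0) (hfU : ∀ᵐ ω ∂μ.restrict {ω | D0 ω * D1 ω = 0}, f ω = 0) :
    HasParallelTrends μ D0 D1 f 0 := by
  intro d0 d1 h0 h1 _
  rw [cexp_eq_inv_mul_setIntegral, mul_eq_zero]
  right
  by_cases h11 : d0 = 1 ∧ d1 = 1
  · obtain ⟨rfl, rfl⟩ := h11
    have hcompl : {ω | D0 ω = 1 ∧ D1 ω = 1} = {ω | D0 ω * D1 ω = 0}ᶜ := by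
      ext ω
      have := hD0_le ω; have := hD1_le ω
      simp only [Set.mem_compl_iff, Set.mem_ofPred_eq, Nat.mul_eq_zero, not_or]
      omega
    have hU : MeasurableSet {ω | D0 ω * D1 ω = 0} :=
      (hD0.mul hD1) (measurableSet_singleton 0)
    have hsum := integral_add_compl hU hf
    rw [integral_congr_ae hfU, integral_zero, hint, zero_add] at hsum
    rw [hcompl, hsum]
  · have hsub : {ω | D0 ω = d0 ∧ D1 ω = d1} ⊆ {ω | D0 ω * D1 ω = 0} := by
      rintro ω ⟨rfl, rfl⟩
      simp only [Set.mem_ofPred_eq, Nat.mul_eq_zero]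
      omega
    rw [integral_congr_ae (ae_restrict_of_ae_restrict_of_subset hsub hfU), integral_zero]

variable [IsFiniteMeasure μ]

lemma setIntegral_eq_mul_of_inter_setOf {D : Ω → ℕ} (hD : Measurable D) (hD_le : ∀ ω, D ω ≤ 1)
    (hf : Integrable f μ) {C : Set Ω} (hC : MeasurableSet C) {τ : ℝ}
    (h : ∀ d : ℕ, d ≤ 1 →
      ∫ ω in C ∩ {ω | D ω = d}, f ω ∂μ = (μ (C ∩ {ω | D ω = d})).toReal * τ) :
    ∫ ω in C, f ω ∂μ = (μ C).toReal * τ := by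
  have hsplit : C ∩ {ω | D ω = 0} ∪ C ∩ {ω | D ω = 1} = C := by
    rw [← Set.inter_union_distrib_left, Set.inter_eq_left]
    intro ω _
    have := hD_le ω
    simp only [Set.mem_union, Set.mem_ofPred_eq]
    omega
  have hdisj : Disjoint (C ∩ {ω | D ω = 0}) (C ∩ {ω | D ω = 1}) :=
    Set.disjoint_left.2 fun ω h h' => zero_ne_one (h.2.symm.trans h'.2)
  rw [← hsplit]
  exact setIntegral_union_eq_mul hdisj (hC.inter (hD (measurableSet_singleton 1))) hf
    (h 0 zero_le_one) (h 1 le_rfl)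

namespace HasParallelTrends

variable {τ : ℝ}

lemma setIntegral_inter_eq_mul (hPT : HasParallelTrends μ D0 D1 f τ) (d0 d1 : ℕ)
    (h0 : d0 ≤ 1) (h1 : d1 ≤ 1) :
    ∫ ω in {ω | D0 ω = d0} ∩ {ω | D1 ω = d1}, f ω ∂μ =
      (μ ({ω | D0 ω = d0} ∩ {ω | D1 ω = d1})).toReal * τ :=
  setIntegral_eq_mul_of_cexp_eq (hPT d0 d1 h0 h1)

lemma setIntegral_setOf_fst_eq_mul (hPT : HasParallelTrends μ D0 D1 f τ) (hD0 : Measurable D0)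
    (hD1 : Measurable D1) (hD1_le : ∀ ω, D1 ω ≤ 1) (hf : Integrable f μ) (d0 : ℕ) (h0 : d0 ≤ 1) :
    ∫ ω in {ω | D0 ω = d0}, f ω ∂μ = (μ {ω | D0 ω = d0}).toReal * τ :=
  setIntegral_eq_mul_of_inter_setOf hD1 hD1_le hf (hD0 (measurableSet_singleton d0))
    fun d1 h1 => hPT.setIntegral_inter_eq_mul d0 d1 h0 h1

lemma setIntegral_setOf_snd_eq_mul (hPT : HasParallelTrends μ D0 D1 f τ) (hD0 : Measurable D0)
    (hD1 : Measurable D1) (hD0_le : ∀ ω, D0 ω ≤ 1) (hf : Integrable f μ) (d1 : ℕ) (h1 : d1 ≤ 1) :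
    ∫ ω in {ω | D1 ω = d1}, f ω ∂μ = (μ {ω | D1 ω = d1}).toReal * τ :=
  setIntegral_eq_mul_of_inter_setOf hD0 hD0_le hf (hD1 (measurableSet_singleton d1))
    fun d0 h0 => by rw [Set.inter_comm]; exact hPT.setIntegral_inter_eq_mul d0 d1 h0 h1

lemma integral_eq_mul (hPT : HasParallelTrends μ D0 D1 f τ) (hD0 : Measurable D0)
    (hD1 : Measurable D1) (hD0_le : ∀ ω, D0 ω ≤ 1) (hD1_le : ∀ ω, D1 ω ≤ 1)
    (hf : Integrable f μ) : ∫ ω, f ω ∂μ = (μ Set.univ).toReal * τ := by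
  rw [← setIntegral_univ]
  exact setIntegral_eq_mul_of_inter_setOf hD0 hD0_le hf .univ fun d0 h0 => by
    rw [Set.univ_inter]; exact hPT.setIntegral_setOf_fst_eq_mul hD0 hD1 hD1_le hf d0 h0

lemma eq_zero (hPT : HasParallelTrends μ D0 D1 f τ) (hD0 : Measurable D0) (hD1 : Measurable D1)
    (hD0_le : ∀ ω, D0 ω ≤ 1) (hD1_le : ∀ ω, D1 ω ≤ 1) (hf : Integrable f μ)
    (hf0 : ∀ ω, D0 ω = 0 → f ω ≤ 0) (hf1 : ∀ ω, D1 ω = 0 → 0 ≤ f ω)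
    (hμ0 : μ {ω | D0 ω = 0} ≠ 0) (hμ1 : μ {ω | D1 ω = 0} ≠ 0) : τ = 0 := by
  refine le_antisymm
    (nonpos_of_mul_nonpos_right ?_ (ENNReal.toReal_pos hμ0 (measure_ne_top _ _)))
    (nonneg_of_mul_nonneg_right ?_ (ENNReal.toReal_pos hμ1 (measure_ne_top _ _)))
  · rw [← hPT.setIntegral_setOf_fst_eq_mul hD0 hD1 hD1_le hf 0 zero_le_one]
    exact setIntegral_nonpos (hD0 (measurableSet_singleton 0)) hf0
  · rw [← hPT.setIntegral_setOf_snd_eq_mul hD0 hD1 hD0_le hf 0 zero_le_one]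
    exact setIntegral_nonneg (hD1 (measurableSet_singleton 0)) hf1

end HasParallelTrends

theorem exists_hasParallelTrends_iff (hD0 : Measurable D0) (hD1 : Measurable D1)
    (hD0_le : ∀ ω, D0 ω ≤ 1) (hD1_le : ∀ ω, D1 ω ≤ 1) (hf : Integrable f μ)
    (hf0 : ∀ ω, D0 ω = 0 → f ω ≤ 0) (hf1 : ∀ ω, D1 ω = 0 → 0 ≤ f ω)
    (hμ0 : μ {ω | D0 ω = 0} ≠ 0) (hμ1 : μ {ω | D1 ω = 0} ≠ 0) :
    (∃ τ, HasParallelTrends μ D0 D1 f τ) ↔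
      ∫ ω, f ω ∂μ = 0 ∧ ∀ᵐ ω ∂μ.restrict {ω | D0 ω * D1 ω = 0}, f ω = 0 := by
  refine ⟨fun ⟨τ, hPT⟩ => ?_,
    fun ⟨hint, hfU⟩ => ⟨0, hasParallelTrends_zero hD0 hD1 hD0_le hD1_le hf hint hfU⟩⟩
  obtain rfl := hPT.eq_zero hD0 hD1 hD0_le hD1_le hf hf0 hf1 hμ0 hμ1
  have hrow := hPT.setIntegral_setOf_fst_eq_mul hD0 hD1 hD1_le hf 0 zero_le_one
  have hcol := hPT.setIntegral_setOf_snd_eq_mul hD0 hD1 hD0_le hf 0 zero_le_one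
  rw [mul_zero] at hrow hcol
  refine ⟨by rw [hPT.integral_eq_mul hD0 hD1 hD0_le hD1_le hf, mul_zero], ?_⟩
  rw [setOf_mul_eq_zero_eq_union, ae_restrict_union_iff]
  exact ⟨ae_restrict_eq_zero_of_setIntegral_eq_zero_of_nonpos (hD0 (measurableSet_singleton 0))
      hf hf0 hrow,
    (setIntegral_eq_zero_iff_of_nonneg_ae (ae_restrict_of_forall_mem
      (hD1 (measurableSet_singleton 0)) hf1) hf.integrableOn).1 hcol⟩

end ParallelTrends

section RoyModel

variable {Ω : Type*} [MeasurableSpace Ω] {μ : Measure Ω}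

lemma integrable_of_forall_eq_zero_or_eq_one [IsFiniteMeasure μ] {Y : Ω → ℝ} (hY : Measurable Y)
    (hbin : ∀ ω, Y ω = 0 ∨ Y ω = 1) : Integrable Y μ :=
  .of_bound hY.aestronglyMeasurable 1 <| ae_of_all _ fun ω => by rcases hbin ω with h | h <;> simp [h]

lemma measure_setOf_eq_zero_ne_zero [IsProbabilityMeasure μ] {D : Ω → ℕ} (hD : Measurable D)
    (hD_le : ∀ ω, D ω ≤ 1) (h : μ {ω | D ω = 1} < 1) : μ {ω | D ω = 0} ≠ 0 := by
  have hcompl : {ω | D ω = 0} = {ω | D ω = 1}ᶜ := by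
    ext ω; have := hD_le ω; simp only [Set.mem_compl_iff, Set.mem_ofPred_eq]; omega
  rw [hcompl]
  exact mt (prob_compl_eq_zero_iff (hD (measurableSet_singleton 1))).1 h.ne

lemma le_one_of_roy {α : Type*} {Y0 Y1 : α → ℝ} {D : α → ℕ}
    (hD : ∀ ω, D ω = if Y1 ω ≥ Y0 ω then 1 else 0) (ω : α) : D ω ≤ 1 := by
  rw [hD ω]; split_ifs <;> simp

lemma measurable_of_roy {Y0 Y1 : Ω → ℝ} {D : Ω → ℕ} (hY0 : Measurable Y0) (hY1 : Measurable Y1)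
    (hD : ∀ ω, D ω = if Y1 ω ≥ Y0 ω then 1 else 0) : Measurable D := by
  rw [funext hD]
  exact Measurable.ite (measurableSet_le hY0 hY1) measurable_const measurable_const

lemma untreated_eq_one_of_roy {y0 y1 : ℝ} (hy0 : y0 = 0 ∨ y0 = 1) (hy1 : 0 ≤ y1)
    (h : (if y1 ≥ y0 then 1 else 0 : ℕ) = 0) : y0 = 1 := by
  rcases hy0 with rfl | rfl
  · simp [hy1] at h
  · rfl

end RoyModel

/-- Static repeated Roy model: with binary potential outcomes, myopic Roy selection
`Dt = 1{Yt(1) ≥ Yt(0)}`, and non-degenerate treatment probabilities, full parallel trends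
holds iff (1) mean untreated outcomes are stationary and (2) untreated outcomes are
degenerate at 1 among the ever-untreated. -/
theorem stmt_6 {Ω : Type*} [MeasurableSpace Ω] (μ : Measure Ω) [IsProbabilityMeasure μ]
    (Y00 Y01 Y10 Y11 : Ω → ℝ)
    (hbin : ∀ ω, (Y00 ω = 0 ∨ Y00 ω = 1) ∧ (Y01 ω = 0 ∨ Y01 ω = 1) ∧
      (Y10 ω = 0 ∨ Y10 ω = 1) ∧ (Y11 ω = 0 ∨ Y11 ω = 1))
    (hY00 : Measurable Y00) (hY01 : Measurable Y01)
    (hY10 : Measurable Y10) (hY11 : Measurable Y11)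
    (D0 D1 : Ω → ℕ)
    -- myopic Roy selection rule in each period
    (hD0 : ∀ ω, D0 ω = if Y01 ω ≥ Y00 ω then 1 else 0)
    (hD1 : ∀ ω, D1 ω = if Y11 ω ≥ Y10 ω then 1 else 0)
    -- non-degenerate treatment probabilities in each period
    (hP0 : 0 < μ {ω | D0 ω = 1} ∧ μ {ω | D0 ω = 1} < 1)
    (hP1 : 0 < μ {ω | D1 ω = 1} ∧ μ {ω | D1 ω = 1} < 1) :
    (∃ τ : ℝ, ∀ d0 d1 : ℕ, d0 ≤ 1 → d1 ≤ 1 → 0 < μ {ω | D0 ω = d0 ∧ D1 ω = d1} →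
        cexp μ {ω | D0 ω = d0 ∧ D1 ω = d1} (fun ω => Y10 ω - Y00 ω) = τ)
    ↔
    ((∫ ω, Y00 ω ∂μ = ∫ ω, Y10 ω ∂μ) ∧
      (μ[|{ω | D0 ω * D1 ω = 0}]) {ω | Y00 ω = 1 ∧ Y10 ω = 1} = 1) := by
  have hbounds {y : ℝ} (hy : y = 0 ∨ y = 1) : 0 ≤ y ∧ y ≤ 1 := by
    rcases hy with rfl | rfl <;> norm_num
  have hY00_one (ω : Ω) (h : D0 ω = 0) : Y00 ω = 1 :=
    untreated_eq_one_of_roy (hbin ω).1 (hbounds (hbin ω).2.1).1 (hD0 ω ▸ h)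
  have hY10_one (ω : Ω) (h : D1 ω = 0) : Y10 ω = 1 :=
    untreated_eq_one_of_roy (hbin ω).2.2.1 (hbounds (hbin ω).2.2.2).1 (hD1 ω ▸ h)
  have hm0 := measurable_of_roy hY00 hY01 hD0
  have hm1 := measurable_of_roy hY10 hY11 hD1
  have hi00 := integrable_of_forall_eq_zero_or_eq_one (μ := μ) hY00 fun ω => (hbin ω).1
  have hi10 := integrable_of_forall_eq_zero_or_eq_one (μ := μ) hY10 fun ω => (hbin ω).2.2.1
  have hμ0 := measure_setOf_eq_zero_ne_zero hm0 (le_one_of_roy hD0) hP0.2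
  have hμU : μ {ω | D0 ω * D1 ω = 0} ≠ 0 :=
    ne_bot_of_le_ne_bot hμ0 (measure_mono fun ω (h : D0 ω = 0) => by simp [h])
  have hS : MeasurableSet {ω | Y00 ω = 1 ∧ Y10 ω = 1} :=
    (hY00 (measurableSet_singleton 1)).inter (hY10 (measurableSet_singleton 1))
  refine (exists_hasParallelTrends_iff (f := fun ω => Y10 ω - Y00 ω) hm0 hm1 (le_one_of_roy hD0)
      (le_one_of_roy hD1) (hi10.sub hi00)
      (fun ω h => by linarith [hY00_one ω h, (hbounds (hbin ω).2.2.1).2])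
      (fun ω h => by linarith [hY10_one ω h, (hbounds (hbin ω).1).2]) hμ0
      (measure_setOf_eq_zero_ne_zero hm1 (le_one_of_roy hD1) hP1.2)).trans ?_
  rw [integral_sub hi10 hi00, sub_eq_zero, cond_eq_one_iff_ae_restrict hμU hS]
  refine and_congr eq_comm (Filter.eventually_congr ((ae_restrict_mem ?_).mono fun ω hω => ?_))
  · exact (hm0.mul hm1) (measurableSet_singleton 0)
  · rcases Nat.mul_eq_zero.1 hω with h | h
    · simp only [Set.mem_ofPred_eq, hY00_one ω h, true_and]
      exact sub_eq_zero
    · simp only [Set.mem_ofPred_eq, hY10_one ω h, and_true]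
      exact sub_eq_zero.trans eq_comm
end

section
/- In the two-period optimal stopping problem where D0 is a measurable function of U0 and D1 is a measurable function of U0 alone (because E[Y1(0) | U0, Y0(0)] = E[Y1(0) | U0]), and E[Y1(0) − Y0(0) | U0] = τ a.s., the parallel trends condition holds: E[Y1(0) − Y0(0) | D0 = 1] = E[Y1(0) − Y0(0) | D0 = 0, D1 = d] = τ for d = 0,1. -/
/-!
The stopping decisions are `σ(U0)`-measurable, so every conditioning event `{D0 = 1}`,
`{D0 = 0, D1 = d}` lies in `σ(U0)`. The average of the trend over such an event equals the average
of its conditional expectation `E[Y1(0) − Y0(0) | U0] = τ` over it, which is `τ`.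
-/

open MeasureTheory ProbabilityTheory

section

variable {Ω : Type*} {m m0 : MeasurableSpace Ω} {μ : Measure Ω}

theorem cexp_eq_setAverage (A : Set Ω) (Y : Ω → ℝ) : cexp μ A Y = ⨍ ω in A, Y ω ∂μ :=
  (setAverage_eq' μ Y A).symm

theorem setAverage_condExp {E : Type*} [NormedAddCommGroup E] [NormedSpace ℝ E]
    [CompleteSpace E] (hm : m ≤ m0) [SigmaFinite (μ.trim hm)] {Y : Ω → E}
    (hY : Integrable Y μ) {A : Set Ω} (hA : MeasurableSet[m] A) :
    ⨍ ω in A, μ[Y | m] ω ∂μ = ⨍ ω in A, Y ω ∂μ := by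
  rw [setAverage_eq, setAverage_eq, setIntegral_condExp hm hY hA]

theorem cexp_eq_of_condExp_ae_eq_const [IsFiniteMeasure μ] (hm : m ≤ m0) {Y : Ω → ℝ}
    (hY : Integrable Y μ) {τ : ℝ} (hτ : μ[Y | m] =ᵐ[μ] fun _ => τ) {A : Set Ω}
    (hA : MeasurableSet[m] A) (hA₀ : μ A ≠ 0) :
    cexp μ A Y = τ := by
  rw [cexp_eq_setAverage, ← setAverage_condExp hm hY hA,
    average_congr (ae_restrict_of_ae hτ), setAverage_const hA₀ (measure_ne_top μ A)]

end

/-- Optimal stopping with sufficient initial information: if both stopping decisions are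
measurable with respect to the initial-information σ-algebra `m` (σ(U0)) — as occurs when
`E[Y1(0) | U0, Y0(0)] = E[Y1(0) | U0]` — and the untreated trend is mean-independent of the
initial information, then parallel trends holds. -/
theorem stmt_9 {Ω : Type*} {m0 : MeasurableSpace Ω} (μ : Measure Ω) [IsProbabilityMeasure μ]
    (m : MeasurableSpace Ω) (hm : m ≤ m0)
    (Y0 Y1 : Ω → ℝ) (hY0 : Integrable Y0 μ) (hY1 : Integrable Y1 μ)
    (D0 D1 : Ω → ℕ) (hD0 : Measurable[m] D0) (hD1 : Measurable[m] D1)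
    (τ : ℝ)
    (hτ : μ[fun ω => Y1 ω - Y0 ω | m] =ᵐ[μ] fun _ => τ)
    (hpos1 : 0 < μ {ω | D0 ω = 1})
    (hpos00 : 0 < μ {ω | D0 ω = 0 ∧ D1 ω = 0})
    (hpos01 : 0 < μ {ω | D0 ω = 0 ∧ D1 ω = 1}) :
    cexp μ {ω | D0 ω = 1} (fun ω => Y1 ω - Y0 ω) = τ ∧
    (∀ d : ℕ, d ≤ 1 →
      cexp μ {ω | D0 ω = 0 ∧ D1 ω = d} (fun ω => Y1 ω - Y0 ω) = τ) := by
  have trend_eq : ∀ A, MeasurableSet[m] A → μ A ≠ 0 → cexp μ A (fun ω => Y1 ω - Y0 ω) = τ :=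
    fun _ hA hA₀ => cexp_eq_of_condExp_ae_eq_const hm (hY1.sub hY0) hτ hA hA₀
  refine ⟨trend_eq _ (hD0 (measurableSet_singleton 1)) hpos1.ne', fun d hd => ?_⟩
  refine trend_eq _ ((hD0 (measurableSet_singleton 0)).inter (hD1 (measurableSet_singleton d))) ?_
  interval_cases d
  · exact hpos00.ne'
  · exact hpos01.ne'
end

section
/- In the learning model with pre-treatment period, for any initial-information value u* in the valuable-learning set (where the period-1 treatment decision is D1 = 1 − Y0(0) conditionally on U0 = u*), the following hold: (i) E[Y1(0) | U0 = u*, D0 = D1 = 0] ≥ E[Y1(0) | U0 = u*, D0 < D1]; and (ii) E[Y1(0) − Y0(0) | U0 = u*, D0 = D1 = 0] ≤ 0 ≤ E[Y1(0) − Y0(0) | U0 = u*, D0 < D1]. -/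
open MeasureTheory ProbabilityTheory

/-!
On the information event `A` the period-1 decision is `D1 = 1 - Y0`, so the never-treated
(`D1 = 0`) are exactly those with `Y0 = 1` and the switchers (`D1 = 1`) those with `Y0 = 0`.
Part (i) is then the informativeness hypothesis read through this identification, and
part (ii) holds pointwise: `Y1 - 1 ≤ 0` on the first group and `Y1 - 0 ≥ 0` on the second.
-/

section CondExpectation

variable {Ω : Type*} {mΩ : MeasurableSpace Ω} {μ : Measure Ω} {s : Set Ω}

/-- Unlike `ae_restrict_of_forall_mem`, no measurability of `s` is needed: a measurable set
disjoint from `s` is `μ[|s]`-null. -/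
theorem ae_cond_of_forall_mem₀ {p : Ω → Prop} (hp : NullMeasurableSet {ω | p ω} μ[|s])
    (h : ∀ ω ∈ s, p ω) : ∀ᵐ ω ∂μ[|s], p ω := by
  obtain ⟨t, hts, ht, hae⟩ := hp.compl.exists_measurable_subset_ae_eq
  have hdisj : s ∩ t = ∅ :=
    Set.eq_empty_of_forall_notMem fun ω ⟨hωs, hωt⟩ => hts hωt (h ω hωs)
  rw [ae_iff, ← Set.compl_ofPred, ← measure_congr hae, cond_apply' ht, hdisj, measure_empty,
    mul_zero]

theorem cexp_nonneg {f : Ω → ℝ} (h : ∀ ω ∈ s, 0 ≤ f ω) : 0 ≤ cexp μ s f := by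
  by_cases hf : AEStronglyMeasurable f μ[|s]
  · exact integral_nonneg_of_ae
      (ae_cond_of_forall_mem₀ (aestronglyMeasurable_const.nullMeasurableSet_le hf) h)
  · rw [cexp, integral_non_aestronglyMeasurable hf]

theorem cexp_nonpos {f : Ω → ℝ} (h : ∀ ω ∈ s, f ω ≤ 0) : cexp μ s f ≤ 0 := by
  by_cases hf : AEStronglyMeasurable f μ[|s]
  · exact integral_nonpos_of_ae
      (ae_cond_of_forall_mem₀ (hf.nullMeasurableSet_le aestronglyMeasurable_const) h)
  · rw [cexp, integral_non_aestronglyMeasurable hf]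

end CondExpectation

theorem inter_setOf_natCast_eq_one_sub {Ω : Type*} {A : Set Ω} {D : Ω → ℕ} {Y : Ω → ℝ}
    (hD : ∀ ω ∈ A, (D ω : ℝ) = 1 - Y ω) (d : ℕ) (y : ℝ) (hdy : (d : ℝ) = 1 - y) :
    A ∩ {ω | D ω = d} = A ∩ {ω | Y ω = y} :=
  Set.sep_ext_iff.mpr fun ω hω => by
    rw [Set.mem_ofPred_eq, Set.mem_ofPred_eq, ← Nat.cast_inj (R := ℝ), hD ω hω, hdy, sub_right_inj,
      eq_comm]

theorem stmt_16_general {Ω : Type*} [MeasurableSpace Ω] (μ : Measure Ω)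
    (Y0 Y1 : Ω → ℝ)
    (hY1bin : ∀ ω, Y1 ω = 0 ∨ Y1 ω = 1)
    (D0 D1 : Ω → ℕ)
    -- pre-treatment period
    (hD0 : ∀ ω, D0 ω = 0)
    -- the event {U0 = u*} for a valuable-learning value u*
    (A : Set Ω)
    -- on A, the period-1 decision conditions on the realized past outcome
    (hvl : ∀ ω ∈ A, (D1 ω : ℝ) = 1 - Y0 ω)
    -- informativeness of the past untreated outcome
    (hsignal : cexp μ (A ∩ {ω | Y0 ω = 0}) Y1 ≤ cexp μ (A ∩ {ω | Y0 ω = 1}) Y1) :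
    (cexp μ (A ∩ {ω | D0 ω = 0 ∧ D1 ω = 1}) Y1
        ≤ cexp μ (A ∩ {ω | D0 ω = 0 ∧ D1 ω = 0}) Y1)
    ∧
    (cexp μ (A ∩ {ω | D0 ω = 0 ∧ D1 ω = 0}) (fun ω => Y1 ω - Y0 ω) ≤ 0
      ∧ 0 ≤ cexp μ (A ∩ {ω | D0 ω = 0 ∧ D1 ω = 1}) (fun ω => Y1 ω - Y0 ω)) := by
  have hY1_le : ∀ ω, Y1 ω ≤ 1 := fun ω => by rcases hY1bin ω with h | h <;> simp [h]
  have hY1_nonneg : ∀ ω, 0 ≤ Y1 ω := fun ω => by rcases hY1bin ω with h | h <;> simp [h]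
  have hnever : A ∩ {ω | D0 ω = 0 ∧ D1 ω = 0} = A ∩ {ω | Y0 ω = 1} := by
    simpa only [hD0, true_and] using inter_setOf_natCast_eq_one_sub hvl 0 1 (by norm_num)
  have hswitch : A ∩ {ω | D0 ω = 0 ∧ D1 ω = 1} = A ∩ {ω | Y0 ω = 0} := by
    simpa only [hD0, true_and] using inter_setOf_natCast_eq_one_sub hvl 1 0 (by norm_num)
  rw [hnever, hswitch]
  refine ⟨hsignal, cexp_nonpos ?_, cexp_nonneg ?_⟩
  · rintro ω ⟨-, hY0 : Y0 ω = 1⟩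
    linarith [hY1_le ω]
  · rintro ω ⟨-, hY0 : Y0 ω = 0⟩
    linarith [hY1_nonneg ω]

/-- Valuable learning and monotone selection: on an initial-information event `A`
(the event `{U0 = u*}` in the valuable-learning set) where the period-1 decision is
`D1 = 1 - Y0(0)`, with a pre-treatment period, binary outcomes, and informative signals,
(i) the never-treated have weakly higher mean untreated period-1 outcomes than switchers
into treatment, and (ii) the untreated trends are ordered oppositely around 0. -/
theorem stmt_16 {Ω : Type*} [MeasurableSpace Ω] (μ : Measure Ω) [IsProbabilityMeasure μ]
    (Y0 Y1 : Ω → ℝ)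
    (hY0bin : ∀ ω, Y0 ω = 0 ∨ Y0 ω = 1) (hY1bin : ∀ ω, Y1 ω = 0 ∨ Y1 ω = 1)
    (D0 D1 : Ω → ℕ)
    -- pre-treatment period
    (hD0 : ∀ ω, D0 ω = 0)
    -- the event {U0 = u*} for a valuable-learning value u*
    (A : Set Ω) (hAmeas : MeasurableSet A)
    -- on A, the period-1 decision conditions on the realized past outcome
    (hvl : ∀ ω ∈ A, (D1 ω : ℝ) = 1 - Y0 ω)
    (hpos0 : 0 < μ (A ∩ {ω | D1 ω = 0})) (hpos1 : 0 < μ (A ∩ {ω | D1 ω = 1}))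
    (hposY0 : 0 < μ (A ∩ {ω | Y0 ω = 0})) (hposY1 : 0 < μ (A ∩ {ω | Y0 ω = 1}))
    -- informativeness of the past untreated outcome
    (hsignal : cexp μ (A ∩ {ω | Y0 ω = 0}) Y1 ≤ cexp μ (A ∩ {ω | Y0 ω = 1}) Y1) :
    (cexp μ (A ∩ {ω | D0 ω = 0 ∧ D1 ω = 1}) Y1
        ≤ cexp μ (A ∩ {ω | D0 ω = 0 ∧ D1 ω = 0}) Y1)
    ∧
    (cexp μ (A ∩ {ω | D0 ω = 0 ∧ D1 ω = 0}) (fun ω => Y1 ω - Y0 ω) ≤ 0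
      ∧ 0 ≤ cexp μ (A ∩ {ω | D0 ω = 0 ∧ D1 ω = 1}) (fun ω => Y1 ω - Y0 ω)) :=
  stmt_16_general μ Y0 Y1 hY1bin D0 D1 hD0 A hvl hsignal
end
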